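/- arXiv:2303.09020 — 4 statements merged into one kernel-verified Lean document; each statement's English description precedes it below -/
import Mathlib

section
/- In the categorical model with informative (strict MLR) review signals of full support, let φ and φ' be two threshold acceptance policies (policies that accept with probability 1 when the posterior expected quality of the review vector strictly exceeds a threshold, 0 when strictly below, and a fixed probability at equality). If there exists a quality q ∈ Q with P_acc(φ', q) < P_acc(φ, q), then P_acc(φ', q') < P_acc(φ, q') for every quality q' ∈ Q. -/
/-- For two threshold acceptance policies in the categorical model with
informative full-support review signals: if one policy accepts some quality
with strictly smaller probability, it accepts every quality with strictly
smaller probability (it is stricter). -/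
theorem stmt7 {Q S : Type*} [Fintype Q] [Fintype S] [LinearOrder Q] [LinearOrder S]
    (m : ℕ) (qval : Q → ℝ) (hqval : StrictMono qval)
    (p : Q → ℝ) (hp : ∀ q, 0 < p q)
    (f : Q → S → ℝ) (hf : ∀ q s, 0 < f q s)
    (hsum : ∀ q, ∑ s, f q s = 1)
    (hMLR : ∀ ⦃q q' : Q⦄, q < q' → ∀ ⦃s s' : S⦄, s < s' →
      f q' s' * f q s > f q' s * f q s')
    (U : (Fin m → S) → ℝ)
    (hU : ∀ v, U v = (∑ q, qval q * p q * ∏ i, f q (v i)) /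
      (∑ q, p q * ∏ i, f q (v i)))
    (φ φ' : (Fin m → S) → ℝ)
    (hφ : ∃ τ r : ℝ, r ∈ Set.Icc (0:ℝ) 1 ∧
      ∀ v, φ v = if τ < U v then 1 else if U v = τ then r else 0)
    (hφ' : ∃ τ' r' : ℝ, r' ∈ Set.Icc (0:ℝ) 1 ∧
      ∀ v, φ' v = if τ' < U v then 1 else if U v = τ' then r' else 0)
    (Pacc Pacc' : Q → ℝ)
    (hPacc : ∀ q, Pacc q = ∑ v : Fin m → S, (∏ i, f q (v i)) * φ v)
    (hPacc' : ∀ q, Pacc' q = ∑ v : Fin m → S, (∏ i, f q (v i)) * φ' v)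
    (hlt : ∃ q : Q, Pacc' q < Pacc q) :
    ∀ q' : Q, Pacc' q' < Pacc q' := by
  obtain ⟨τ, r, ⟨hr0, hr1⟩, hφeq⟩ := hφ
  obtain ⟨τ', r', ⟨hr0', hr1'⟩, hφeq'⟩ := hφ'
  obtain ⟨q, hq⟩ := hlt
  have hw : ∀ (q : Q) (v : Fin m → S), 0 < ∏ i, f q (v i) := fun q v =>
    Finset.prod_pos (fun i _ => hf q (v i))
  -- Two threshold policies are pointwise comparable
  have hcomp : (∀ v, φ' v ≤ φ v) ∨ (∀ v, φ v ≤ φ' v) := by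
    rcases lt_trichotomy τ τ' with h | h | h
    · left
      intro v
      rw [hφeq, hφeq']
      split_ifs with h1 h2 h3 h4 h5 <;> try linarith
    · rcases le_total r' r with hr | hr
      · left
        intro v
        rw [hφeq, hφeq']
        subst h
        split_ifs <;> linarith
      · right
        intro v
        rw [hφeq, hφeq']
        subst h
        split_ifs <;> linarith
    · right
      intro v
      rw [hφeq, hφeq']
      split_ifs <;> linarith
  have hle : ∀ v, φ' v ≤ φ v := by
    rcases hcomp with h | h
    · exact h
    · exfalso
      have : Pacc q ≤ Pacc' q := by
        rw [hPacc, hPacc']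
        exact Finset.sum_le_sum fun v _ =>
          mul_le_mul_of_nonneg_left (h v) (hw q v).le
      linarith
  -- there is a point of strict inequality
  have hex : ∃ v, φ' v < φ v := by
    by_contra hc
    push_neg at hc
    have heq : ∀ v, φ' v = φ v := fun v => le_antisymm (hle v) (hc v)
    have : Pacc' q = Pacc q := by
      rw [hPacc, hPacc']
      exact Finset.sum_congr rfl fun v _ => by rw [heq v]
    linarith
  obtain ⟨v₀, hv₀⟩ := hex
  intro q'
  rw [hPacc, hPacc']
  apply Finset.sum_lt_sum
  · exact fun v _ => mul_le_mul_of_nonneg_left (hle v) (hw q' v).le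
  · exact ⟨v₀, Finset.mem_univ v₀,
      mul_lt_mul_of_pos_left hv₀ (hw q' v₀)⟩
end

section
/- Let Σ be a finite ordered signal set, Q a finite quality set, and {F_q} an informative (strict MLR) family of full-support pmfs on Σ. Fix q̄ ∈ Q and two threshold acceptance tests h, h*: Σ → [0,1], where h* has threshold form (h*(s) = 1 for s > τ, = r for s = τ, = 0 for s < τ) and h(s) = r'·γ(s, τ') + Σ_{s' > τ'} γ(s, s') for some garbling γ and threshold (τ', r'). If E_{s ~ F_{q̄}}[h*(s)] = E_{s ~ F_{q̄}}[h(s)], then for every q > q̄, E_{s ~ F_q}[h*(s)] ≥ E_{s ~ F_q}[h(s)]. -/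
/-- Key step of the Blackwell–threshold comparison: if the threshold test h*
and the garbled test h have the same acceptance probability at quality q̄,
then h* accepts every higher quality q > q̄ with at least the probability
of h (under strict MLR of the signal family). -/
theorem stmt14 {S S' Q : Type*} [Fintype S] [LinearOrder S] [Fintype S']
    [LinearOrder S'] [Preorder Q]
    (F : Q → S → ℝ) (hF : ∀ q s, 0 < F q s)
    (qbar : Q)
    (hMLR : ∀ q, qbar < q → StrictMono (fun s => F q s / F qbar s))
    (τ : S) (r : ℝ) (hr : r ∈ Set.Icc (0:ℝ) 1)
    (hstar : S → ℝ)
    (hhstar : ∀ s, hstar s = if τ < s then 1 else if s = τ then r else 0)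
    (γ : S → S' → ℝ) (hγ0 : ∀ s s', 0 ≤ γ s s') (hγ1 : ∀ s, ∑ s', γ s s' = 1)
    (τ' : S') (r' : ℝ) (hr' : r' ∈ Set.Icc (0:ℝ) 1)
    (h : S → ℝ)
    (hh : ∀ s, h s = r' * γ s τ' +
      ∑ s' ∈ Finset.univ.filter (fun s' => τ' < s'), γ s s')
    (heq : ∑ s, hstar s * F qbar s = ∑ s, h s * F qbar s) :
    ∀ q, qbar < q → ∑ s, h s * F q s ≤ ∑ s, hstar s * F q s := by
  intro q hq
  have hmono := hMLR q hq
  set η : S → ℝ := fun s => F q s / F qbar s with hη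
  have h0 : ∀ s, 0 ≤ h s := by
    intro s
    rw [hh]
    have : 0 ≤ ∑ s' ∈ Finset.univ.filter (fun s' => τ' < s'), γ s s' :=
      Finset.sum_nonneg fun s' _ => hγ0 s s'
    nlinarith [hγ0 s τ', hr'.1, hr'.2]
  have h1 : ∀ s, h s ≤ 1 := by
    intro s
    rw [hh]
    have hle : γ s τ' + ∑ s' ∈ Finset.univ.filter (fun s' => τ' < s'), γ s s' ≤ 1 := by
      have : insert τ' (Finset.univ.filter (fun s' => τ' < s')) ⊆ Finset.univ :=
        Finset.subset_univ _
      calc γ s τ' + ∑ s' ∈ Finset.univ.filter (fun s' => τ' < s'), γ s s'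
          = ∑ s' ∈ insert τ' (Finset.univ.filter (fun s' => τ' < s')), γ s s' := by
            rw [Finset.sum_insert (by simp)]
        _ ≤ ∑ s', γ s s' := Finset.sum_le_sum_of_subset_of_nonneg this
            (fun i _ _ => hγ0 s i)
        _ = 1 := hγ1 s
    nlinarith [hγ0 s τ', hr'.1, hr'.2]
  have key : ∀ s, (h s - hstar s) * F q s ≤ ((h s - hstar s) * F qbar s) * η τ := by
    intro s
    have hFq : F q s = η s * F qbar s := by
      simp only [hη]
      rw [div_mul_cancel₀ _ (hF qbar s).ne']
    rw [hFq, show (h s - hstar s) * (η s * F qbar s) = ((h s - hstar s) * F qbar s) * η s from by ring]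
    rcases lt_trichotomy s τ with hlt | heqs | hgt
    · have ha : 0 ≤ (h s - hstar s) * F qbar s := by
        have : hstar s = 0 := by rw [hhstar]; simp [not_lt_of_gt hlt, ne_of_lt hlt]
        nlinarith [h0 s, (hF qbar s).le]
      exact mul_le_mul_of_nonneg_left (le_of_lt (hmono hlt)) ha
    · subst heqs; exact le_refl _
    · have ha : (h s - hstar s) * F qbar s ≤ 0 := by
        have : hstar s = 1 := by rw [hhstar]; simp [hgt]
        nlinarith [h1 s, (hF qbar s).le]
      exact mul_le_mul_of_nonpos_left (le_of_lt (hmono hgt)) ha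
  have hsum : ∑ s, (h s - hstar s) * F q s ≤
      (∑ s, (h s - hstar s) * F qbar s) * η τ := by
    rw [Finset.sum_mul]
    exact Finset.sum_le_sum fun s _ => key s
  have hz : ∑ s, (h s - hstar s) * F qbar s = 0 := by
    simp only [sub_mul]
    rw [Finset.sum_sub_distrib, heq, sub_self]
  rw [hz, zero_mul] at hsum
  have := Finset.sum_sub_distrib (f := fun s => h s * F q s)
    (g := fun s => hstar s * F q s) (s := Finset.univ)
  simp only [sub_mul] at hsum
  linarith [hsum, this]
end

section
/- (Key inequality in the Blackwell–threshold proof) Let Σ be a finite ordered set, μ and ν two strictly positive functions on Σ with monotone increasing likelihood ratio η_s = ν(s)/μ(s) (i.e., η strictly increasing in s). Let h: Σ → [0,1] be arbitrary and let h* be the threshold test with threshold τ ∈ Σ and tie-breaking probability r ∈ [0,1]: h*(s) = 1 for s > τ, r for s = τ, 0 for s < τ. If Σ_s h*(s)·μ(s) ≥ Σ_s h(s)·μ(s), then Σ_s h*(s)·ν(s) ≥ Σ_s h(s)·ν(s). -/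
/-- Discrete Karlin–Rubin / Neyman–Pearson type lemma: among tests with a
given size under μ, the threshold test maximizes power under any ν with a
strictly increasing likelihood ratio with respect to μ. -/
theorem stmt15 {S : Type*} [Fintype S] [LinearOrder S]
    (μ ν : S → ℝ) (hμ : ∀ s, 0 < μ s) (hν : ∀ s, 0 < ν s)
    (hMLR : StrictMono (fun s => ν s / μ s))
    (h : S → ℝ) (hh : ∀ s, h s ∈ Set.Icc (0:ℝ) 1)
    (τ : S) (r : ℝ) (hr : r ∈ Set.Icc (0:ℝ) 1)
    (hstar : S → ℝ)
    (hhstar : ∀ s, hstar s = if τ < s then 1 else if s = τ then r else 0)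
    (hsize : ∑ s, h s * μ s ≤ ∑ s, hstar s * μ s) :
    ∑ s, h s * ν s ≤ ∑ s, hstar s * ν s := by
  set c : ℝ := ν τ / μ τ with hc
  have hcpos : 0 < c := div_pos (hν τ) (hμ τ)
  -- pointwise key inequality
  have key : ∀ s, (hstar s - h s) * (ν s - c * μ s) ≥ 0 := by
    intro s
    rcases lt_trichotomy τ s with hlt | heq | hgt
    · have h1 : hstar s = 1 := by rw [hhstar s, if_pos hlt]
      have hν' : c * μ s < ν s := (lt_div_iff₀ (hμ s)).mp (hMLR hlt)
      have := (hh s).2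
      nlinarith
    · have h0 : ν s - c * μ s = 0 := by
        rw [← heq, hc, div_mul_cancel₀ _ (hμ τ).ne', sub_self]
      rw [h0, mul_zero]
    · have h1 : hstar s = 0 := by
        rw [hhstar s, if_neg (not_lt.mpr hgt.le), if_neg (ne_of_lt hgt)]
      have hν' : ν s < c * μ s := (div_lt_iff₀ (hμ s)).mp (hMLR hgt)
      have := (hh s).1
      nlinarith
  have hsum : 0 ≤ ∑ s, (hstar s - h s) * (ν s - c * μ s) :=
    Finset.sum_nonneg fun s _ => key s
  have expand : ∑ s, (hstar s - h s) * (ν s - c * μ s)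
      = (∑ s, hstar s * ν s - ∑ s, h s * ν s)
        - c * (∑ s, hstar s * μ s - ∑ s, h s * μ s) := by
    rw [← Finset.sum_sub_distrib, ← Finset.sum_sub_distrib, Finset.mul_sum,
      ← Finset.sum_sub_distrib]
    apply Finset.sum_congr rfl
    intro s _; ring
  nlinarith [mul_nonneg hcpos.le (sub_nonneg.mpr hsize)]
end

section
/- Under a monotone memoryless acceptance policy φ (with unlimited resubmissions), there exists a threshold best response for a noiseless author: there is θ ∈ ℝ ∪ {±∞} such that submitting all papers of quality q with P_acc(φ, q) > 1/ρ and no papers with P_acc(φ, q) < 1/ρ is optimal, where ρ = (V − η)/(1 − η). Specifically, with θ̲ = sup{q : P_acc(φ,q) < 1/ρ} and θ̄ = inf{q : P_acc(φ,q) > 1/ρ}, we have θ̲ ≤ θ̄, and for every q in the open interval (θ̲, θ̄), P_acc(φ, q) = 1/ρ, so the author is indifferent at all such q. -/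
/-- Threshold best response for a noiseless author under a monotone memoryless
policy: submitting beats the sure bet iff the per-round acceptance probability
exceeds 1/ρ; with θ̲ = sup{q : P_acc q < 1/ρ} and θ̄ = inf{q : P_acc q > 1/ρ}
(in the extended reals, allowing ±∞), we have θ̲ ≤ θ̄, and the author is
indifferent (P_acc q = 1/ρ) for every q strictly between them. -/
theorem stmt16 (V η : ℝ) (hV : 1 < V) (hη : η ∈ Set.Ioo (0:ℝ) 1)
    (ρ : ℝ) (hρ : ρ = (V - η) / (1 - η))
    (Pacc : ℝ → ℝ) (hmono : Monotone Pacc)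
    (h01 : ∀ q, Pacc q ∈ Set.Icc (0:ℝ) 1)
    (lo hi : EReal)
    (hlo : lo = sSup ((fun q : ℝ => (q : EReal)) '' {q : ℝ | Pacc q < 1 / ρ}))
    (hhi : hi = sInf ((fun q : ℝ => (q : EReal)) '' {q : ℝ | 1 / ρ < Pacc q})) :
    (∀ q : ℝ, 1 < V * Pacc q / (1 - η * (1 - Pacc q)) ↔ 1 / ρ < Pacc q) ∧
    lo ≤ hi ∧
    (∀ q : ℝ, lo < (q : EReal) → (q : EReal) < hi → Pacc q = 1 / ρ) := by
  obtain ⟨hη0, hη1⟩ := hη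
  have hVη : 0 < V - η := by linarith
  have h1η : 0 < 1 - η := by linarith
  have hinv : 1 / ρ = (1 - η) / (V - η) := by rw [hρ, one_div_div]
  refine ⟨?_, ?_, ?_⟩
  · intro q
    obtain ⟨hp0, hp1⟩ := h01 q
    have hden : 0 < 1 - η * (1 - Pacc q) := by nlinarith
    rw [lt_div_iff₀ hden, hinv, div_lt_iff₀ hVη]
    constructor <;> intro h <;> nlinarith
  · rw [hlo, hhi]
    by_contra h
    push_neg at h
    rw [sInf_lt_iff] at h
    obtain ⟨b, hb, hbl⟩ := h
    rw [lt_sSup_iff] at hbl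
    obtain ⟨a, ha, hab⟩ := hbl
    obtain ⟨qb, hqb, rfl⟩ := hb
    obtain ⟨qa, hqa, rfl⟩ := ha
    have hlt : qb < qa := by simpa using hab
    have := hmono hlt.le
    simp only [Set.mem_setOf_eq] at hqa hqb
    linarith
  · intro q hq1 hq2
    by_contra h
    rcases lt_or_gt_of_ne h with h' | h'
    · have : (q : EReal) ≤ lo := by
        rw [hlo]; exact le_sSup ⟨q, h', rfl⟩
      exact absurd hq1 this.not_gt
    · have : hi ≤ (q : EReal) := by
        rw [hhi]; exact sInf_le ⟨q, h', rfl⟩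
      exact absurd hq2 this.not_gt
end
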